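/- Let ε₁, ε₂, ε₃, ε₄, ε₅ ∈ ℕ and consider the formal power series f := (1+t)^{ε₁}·(1+t³)^{ε₃}·(1+t⁵)^{ε₅}·((1−t²)^{ε₂}·(1−t⁴)^{ε₄})^{−1} ∈ ℤ⟦t⟧. Writing β_i for the coefficient of t^i in f, the following hold: β₀ = 1; β₁ = ε₁; β₂ = ε₂ + C(ε₁,2); β₃ = ε₃ + ε₂ε₁ + C(ε₁,3); β₄ = ε₄ + ε₃ε₁ + C(ε₂+1,2) + ε₂·C(ε₁,2) + C(ε₁,4); and β₅ = ε₅ + ε₄ε₁ + ε₃ε₂ + ε₃·C(ε₁,2) + ε₂²ε₁ − ε₁·C(ε₂,2) + ε₂·C(ε₁,3) + C(ε₁,5), where C(m,r) denotes the binomial coefficient. (These are exactly the relations between the first five Betti numbers and the first five deviations of a local ring, since the factors of the deviation product formula of index ≥ 6 do not affect coefficients in degrees ≤ 5; the formula for β₄ corrects the one in Avramov's 'Infinite free resolutions'.) -/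

import Mathlib

/-!
Multiplying out `f · (1 - t²)^ε₂ (1 - t⁴)^ε₄` and comparing coefficients of `t⁰, …, t⁵` gives a
triangular linear system for `β₀, …, β₅`, since the denominator is `1 - ε₂ t² + (C(ε₂,2) - ε₄) t⁴`
modulo `t⁶`. Solving it yields the formulas; the term `C(ε₂+1,2)` in `β₄` arises as
`ε₂² - C(ε₂,2)`, the sum of two consecutive triangular numbers being a square.
-/

namespace PowerSeries

variable {R : Type*} [CommRing R]

theorem coeff_one_add_X_pow (n m : ℕ) : coeff m ((1 + X : R⟦X⟧) ^ n) = n.choose m := by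
  rw [← Polynomial.coe_X, ← Polynomial.coe_one, ← Polynomial.coe_add, ← Polynomial.coe_pow,
    Polynomial.coeff_coe, Polynomial.coeff_one_add_X_pow]

theorem coeff_one_sub_X_pow (n m : ℕ) :
    coeff m ((1 - X : R⟦X⟧) ^ n) = (-1) ^ m * n.choose m := by
  rw [sub_eq_add_neg, ← rescale_neg_one_X, ← map_one (rescale (-1 : R)), ← map_add, ← map_pow,
    coeff_rescale, coeff_one_add_X_pow]

theorem coeff_one_add_X_pow_pow {k : ℕ} (hk : k ≠ 0) (n m : ℕ) :
    coeff m ((1 + X ^ k : R⟦X⟧) ^ n) = if k ∣ m then (n.choose (m / k) : R) else 0 := by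
  rw [← expand_X k hk, ← map_one (expand k hk), ← map_add, ← map_pow, coeff_expand,
    coeff_one_add_X_pow]

theorem coeff_one_sub_X_pow_pow {k : ℕ} (hk : k ≠ 0) (n m : ℕ) :
    coeff m ((1 - X ^ k : R⟦X⟧) ^ n) =
      if k ∣ m then (-1) ^ (m / k) * (n.choose (m / k) : R) else 0 := by
  rw [← expand_X k hk, ← map_one (expand k hk), ← map_sub, ← map_pow, coeff_expand,
    coeff_one_sub_X_pow]

end PowerSeries

open PowerSeries

theorem Nat.choose_two_add_succ_choose_two (n : ℕ) : n.choose 2 + (n + 1).choose 2 = n ^ 2 := by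
  have h := Nat.add_one_mul_choose_eq n 1
  rw [Nat.choose_succ_succ', Nat.choose_one_right] at h ⊢
  nlinarith

/-- For `ε₁,…,ε₅ ∈ ℕ`, let
`f := (1+t)^{ε₁}(1+t³)^{ε₃}(1+t⁵)^{ε₅} / ((1−t²)^{ε₂}(1−t⁴)^{ε₄}) ∈ ℤ⟦t⟧`
(characterized by `f · (1−t²)^{ε₂}(1−t⁴)^{ε₄} = (1+t)^{ε₁}(1+t³)^{ε₃}(1+t⁵)^{ε₅}`,
the denominator having constant coefficient `1`). Writing `β_i` for the coefficient of
`t^i` in `f`: `β₀ = 1`, `β₁ = ε₁`, `β₂ = ε₂ + C(ε₁,2)`, `β₃ = ε₃ + ε₂ε₁ + C(ε₁,3)`,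
`β₄ = ε₄ + ε₃ε₁ + C(ε₂+1,2) + ε₂C(ε₁,2) + C(ε₁,4)`, and
`β₅ = ε₅ + ε₄ε₁ + ε₃ε₂ + ε₃C(ε₁,2) + ε₂²ε₁ − ε₁C(ε₂,2) + ε₂C(ε₁,3) + C(ε₁,5)`. -/
theorem stmt_13 (ε₁ ε₂ ε₃ ε₄ ε₅ : ℕ) (f : PowerSeries ℤ)
    (hf : f * ((1 - PowerSeries.X ^ 2) ^ ε₂ * (1 - PowerSeries.X ^ 4) ^ ε₄) =
      (1 + PowerSeries.X) ^ ε₁ * (1 + PowerSeries.X ^ 3) ^ ε₃ *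
        (1 + PowerSeries.X ^ 5) ^ ε₅) :
    PowerSeries.coeff 0 f = 1 ∧
      PowerSeries.coeff 1 f = (ε₁ : ℤ) ∧
      PowerSeries.coeff 2 f = (ε₂ : ℤ) + (ε₁.choose 2 : ℤ) ∧
      PowerSeries.coeff 3 f = (ε₃ : ℤ) + (ε₂ : ℤ) * (ε₁ : ℤ) + (ε₁.choose 3 : ℤ) ∧
      PowerSeries.coeff 4 f = (ε₄ : ℤ) + (ε₃ : ℤ) * (ε₁ : ℤ) +
        ((ε₂ + 1).choose 2 : ℤ) + (ε₂ : ℤ) * (ε₁.choose 2 : ℤ) + (ε₁.choose 4 : ℤ) ∧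
      PowerSeries.coeff 5 f = (ε₅ : ℤ) + (ε₄ : ℤ) * (ε₁ : ℤ) + (ε₃ : ℤ) * (ε₂ : ℤ) +
        (ε₃ : ℤ) * (ε₁.choose 2 : ℤ) + (ε₂ : ℤ) ^ 2 * (ε₁ : ℤ) -
        (ε₁ : ℤ) * (ε₂.choose 2 : ℤ) + (ε₂ : ℤ) * (ε₁.choose 3 : ℤ) +
        (ε₁.choose 5 : ℤ) := by
  have h0 := congrArg (coeff 0) hf
  have h1 := congrArg (coeff 1) hf
  have h2 := congrArg (coeff 2) hf
  have h3 := congrArg (coeff 3) hf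
  have h4 := congrArg (coeff 4) hf
  have h5 := congrArg (coeff 5) hf
  simp only [coeff_mul, Finset.Nat.sum_antidiagonal_eq_sum_range_succ_mk, Finset.sum_range_succ,
    Finset.sum_range_zero] at h0 h1 h2 h3 h4 h5
  norm_num [coeff_one_add_X_pow, coeff_one_add_X_pow_pow, coeff_one_sub_X_pow_pow]
    at h0 h1 h2 h3 h4 h5
  have hsq : (ε₂.choose 2 : ℤ) + ((ε₂ + 1).choose 2 : ℤ) = ε₂ ^ 2 := by
    exact_mod_cast Nat.choose_two_add_succ_choose_two ε₂
  refine ⟨(coeff_zero_eq_constantCoeff_apply f).trans h0, h1, ?_, ?_, ?_, ?_⟩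
  · linear_combination h2 + (ε₂ : ℤ) * h0
  · linear_combination h3 + (ε₂ : ℤ) * h1
  · linear_combination
      h4 + (ε₂ : ℤ) * h2 + ((ε₄ : ℤ) - (ε₂.choose 2 : ℤ) + (ε₂ : ℤ) ^ 2) * h0 - hsq
  · linear_combination
      h5 + (ε₂ : ℤ) * h3 + ((ε₄ : ℤ) - (ε₂.choose 2 : ℤ) + (ε₂ : ℤ) ^ 2) * h1
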